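/- arXiv:2111.00910 — 2 statements merged into one kernel-verified Lean document; each statement's English description precedes it below -/
import Mathlib

section
/- For every n ≥ 2, the values D(i)^n are strictly decreasing in i for 1 ≤ i ≤ ⌊n/2⌋, except for the last step: D^n > D(1)^n > D(2)^n > ... > D(⌊n/2⌋-1)^n ≥ D(⌊n/2⌋)^n, and the final inequality is an equality if and only if 4 divides n. -/
/-- `D^m = Σ_{k=1}^{m-1} min{2k, 2(m-k)}` would equal `⌊m²/2⌋`; here defined as `⌊m²/2⌋`. -/
def Dm (m : ℕ) : ℕ := m ^ 2 / 2

/-- `D^n`, the maximum full flag distance: `Σ_{k=1}^{n-1} min{2k, 2(n-k)}`. -/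
def Dfull (n : ℕ) : ℕ := ∑ k ∈ Finset.Icc 1 (n - 1), min (2 * k) (2 * (n - k))

/-- The `j`-th component `D(i)^n_j = min{2j, 2(n-j), 2|i-j|}`. -/
def Dc (n i j : ℕ) : ℕ :=
  min (2 * j) (min (2 * (n - j)) (2 * ((i : ℤ) - (j : ℤ)).natAbs))

/-- `D(i)^n = Σ_{j=1}^{n-1} min{2j, 2(n-j), 2|i-j|}`. -/
def Di (n i : ℕ) : ℕ := ∑ j ∈ Finset.Icc 1 (n - 1), Dc n i j

lemma sq_mod_two (k : ℕ) : k ^ 2 % 2 = k % 2 := by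
  rcases Nat.mod_two_eq_zero_or_one k with h | h <;> simp [pow_two, Nat.mul_mod, h]

lemma icc_sum_range (a b : ℕ) (f : ℕ → ℕ) :
    ∑ i ∈ Finset.Icc a b, f i = ∑ i ∈ Finset.range (b + 1 - a), f (a + i) := by
  rw [← Finset.Ico_add_one_right_eq_Icc, Finset.sum_Ico_eq_sum_range]

lemma sumMin (m : ℕ) : ∑ k ∈ Finset.Icc 1 (m - 1), min (2 * k) (2 * (m - k)) = m ^ 2 / 2 := by
  induction m using Nat.strong_induction_on with
  | _ m ih =>
    match m with
    | 0 => simp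
    | 1 => simp
    | 2 => decide
    | (m + 3) =>
      have h := ih (m + 1) (by omega)
      rw [icc_sum_range] at h ⊢
      have hr1 : m + 1 - 1 + 1 - 1 = m := by omega
      have hr2 : m + 3 - 1 + 1 - 1 = m + 2 := by omega
      rw [hr1] at h
      rw [hr2, Finset.sum_range_succ, Finset.sum_range_succ']
      have hmid : ∀ i ∈ Finset.range m,
          min (2 * (1 + (i + 1))) (2 * (m + 3 - (1 + (i + 1))))
            = min (2 * (1 + i)) (2 * (m + 1 - (1 + i))) + 2 := by
        intro i hi
        simp only [Finset.mem_range] at hi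
        have e1 : 2 * (1 + (i + 1)) = 2 * (1 + i) + 2 := by ring
        have e2 : 2 * (m + 3 - (1 + (i + 1))) = 2 * (m + 1 - (1 + i)) + 2 := by omega
        rw [e1, e2, min_add_add_right]
      rw [Finset.sum_congr rfl hmid, Finset.sum_add_distrib, Finset.sum_const, h]
      have e3 : min (2 * (1 + 0)) (2 * (m + 3 - (1 + 0))) = 2 := by
        have : 2 * (m + 3 - (1 + 0)) = 2 * m + 4 := by omega
        rw [this]; omega
      have e4 : min (2 * (1 + (m + 1))) (2 * (m + 3 - (1 + (m + 1)))) = 2 := by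
        have h1 : 2 * (1 + (m + 1)) = 2 * m + 4 := by ring
        have h2 : 2 * (m + 3 - (1 + (m + 1))) = 2 := by omega
        rw [h1, h2]; omega
      rw [e3, e4]
      have hs : (m + 3) ^ 2 = (m + 1) ^ 2 + (4 * m + 8) := by ring
      have hp := sq_mod_two (m + 1)
      simp only [Finset.card_range, smul_eq_mul]
      omega

lemma dfull_eq (n : ℕ) : Dfull n = n ^ 2 / 2 := sumMin n

lemma di_eq (n i : ℕ) (h1 : 1 ≤ i) (h2 : i ≤ n - 1) (hn : 1 ≤ n) :
    Di n i = i ^ 2 / 2 + (n - i) ^ 2 / 2 := by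
  unfold Di
  have hsplit : ∑ j ∈ Finset.Ioc 0 i, Dc n i j + ∑ j ∈ Finset.Ioc i (n - 1), Dc n i j
      = ∑ j ∈ Finset.Ioc 0 (n - 1), Dc n i j :=
    Finset.sum_Ioc_consecutive _ (by omega) h2
  have hIcc : Finset.Ioc 0 (n - 1) = Finset.Icc 1 (n - 1) := by
    ext x; simp [Finset.mem_Ioc, Finset.mem_Icc]; omega
  rw [hIcc] at hsplit
  rw [← hsplit]
  congr 1
  · -- first part: ∑_{j=1}^{i} min(2j, 2(i-j)) = i²/2
    have h0 : Finset.Ioc 0 i = Finset.Icc 1 i := by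
      ext x; simp [Finset.mem_Ioc, Finset.mem_Icc]; omega
    rw [h0]
    have hc : ∀ j ∈ Finset.Icc 1 i, Dc n i j = min (2 * j) (2 * (i - j)) := by
      intro j hj
      simp only [Finset.mem_Icc] at hj
      unfold Dc
      have hA : ((i : ℤ) - (j : ℤ)).natAbs = i - j := by omega
      rw [hA]
      have hle : min (2 * j) (2 * (i - j)) ≤ 2 * (n - j) := by
        have : i - j ≤ n - j := by omega
        calc min (2 * j) (2 * (i - j)) ≤ 2 * (i - j) := min_le_right _ _
          _ ≤ 2 * (n - j) := by omega
      have hmm : 2 * (i - j) ≤ 2 * (n - j) := by omega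
      rw [min_eq_right hmm]
    rw [Finset.sum_congr rfl hc]
    have hstep : ∑ j ∈ Finset.Icc 1 i, min (2 * j) (2 * (i - j))
        = ∑ j ∈ Finset.Icc 1 (i - 1), min (2 * j) (2 * (i - j)) + min (2 * i) (2 * (i - i)) := by
      have hi' : i = (i - 1) + 1 := by omega
      nth_rewrite 1 [hi']
      rw [Finset.sum_Icc_succ_top (by omega), ← hi']
    rw [hstep]
    have hz : min (2 * i) (2 * (i - i)) = 0 := by simp
    rw [hz, add_zero, sumMin]
  · -- second part: ∑_{j=i+1}^{n-1} min(2(n-j), 2(j-i)) = (n-i)²/2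
    have h0 : Finset.Ioc i (n - 1) = Finset.Icc (i + 1) (n - 1) := by
      ext x; simp only [Finset.mem_Ioc, Finset.mem_Icc]; omega
    rw [h0, icc_sum_range, ← sumMin (n - i), icc_sum_range]
    have hlen : n - 1 + 1 - (i + 1) = n - i - 1 + 1 - 1 := by omega
    rw [hlen]
    apply Finset.sum_congr rfl
    intro k hk
    simp only [Finset.mem_range] at hk
    unfold Dc
    have hA : ((i : ℤ) - (i + 1 + k : ℕ)).natAbs = k + 1 := by
      push_cast; omega
    rw [hA]
    have e1 : 2 * (n - (i + 1 + k)) = 2 * (n - i - (1 + k)) := by omega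
    have e2 : 2 * (k + 1) = 2 * (1 + k) := by ring
    rw [e1, e2]
    have hle : min (2 * (n - i - (1 + k))) (2 * (1 + k)) ≤ 2 * (i + 1 + k) := by
      calc min (2 * (n - i - (1 + k))) (2 * (1 + k)) ≤ 2 * (1 + k) := min_le_right _ _
        _ ≤ 2 * (i + 1 + k) := by omega
    rw [min_eq_right hle, min_comm]

theorem stmt9 (n : ℕ) (hn : 2 ≤ n) :
    Dfull n > Di n 1 ∧
    (∀ i, 1 ≤ i → i + 1 < n / 2 → Di n i > Di n (i + 1)) ∧
    (2 ≤ n / 2 →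
      Di n (n / 2 - 1) ≥ Di n (n / 2) ∧ (Di n (n / 2 - 1) = Di n (n / 2) ↔ 4 ∣ n)) := by
  refine ⟨?_, ?_, ?_⟩
  · rw [dfull_eq, di_eq n 1 le_rfl (by omega) (by omega)]
    obtain ⟨m, rfl⟩ : ∃ m, n = m + 1 := ⟨n - 1, by omega⟩
    simp only [Nat.add_sub_cancel]
    have h1 : (m + 1) ^ 2 = m ^ 2 + 2 * m + 1 := by ring
    have h2 := sq_mod_two m
    have h3 := sq_mod_two (m + 1)
    omega
  · intro i hi hlt
    rw [di_eq n i hi (by omega) (by omega),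
        di_eq n (i + 1) (by omega) (by omega) (by omega)]
    have h1 : (i + 1) ^ 2 = i ^ 2 + 2 * i + 1 := by ring
    have h2 : (n - i) ^ 2 = (n - (i + 1)) ^ 2 + 2 * (n - (i + 1)) + 1 := by
      have h : n - i = (n - (i + 1)) + 1 := by omega
      rw [h]; ring
    have p1 := sq_mod_two i
    have p2 := sq_mod_two (i + 1)
    have p3 := sq_mod_two (n - i)
    have p4 := sq_mod_two (n - (i + 1))
    omega
  · intro hq
    rw [di_eq n (n / 2 - 1) (by omega) (by omega) (by omega),
        di_eq n (n / 2) (by omega) (by omega) (by omega)]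
    have h1 : (n / 2) ^ 2 = (n / 2 - 1) ^ 2 + 2 * (n / 2 - 1) + 1 := by
      have h : n / 2 = (n / 2 - 1) + 1 := by omega
      nth_rewrite 1 [h]; ring
    have h2 : (n - (n / 2 - 1)) ^ 2 = (n - n / 2) ^ 2 + 2 * (n - n / 2) + 1 := by
      have h : n - (n / 2 - 1) = (n - n / 2) + 1 := by omega
      rw [h]; ring
    have p1 := sq_mod_two (n / 2 - 1)
    have p2 := sq_mod_two (n / 2)
    have p3 := sq_mod_two (n - (n / 2 - 1))
    have p4 := sq_mod_two (n - n / 2)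
    constructor
    · omega
    · omega
end

section
/- Let n ≥ 2, 1 ≤ M ≤ n-1, and any choice of indices 1 ≤ i_1 < ... < i_M ≤ n-1. Then D(i_1,...,i_M)^n ≤ D(1,2,...,M)^n = D^{n-M}, where D^m = ⌊m²/2⌋. -/
/-- The `j`-th component `min{2j, 2(n-j), 2|j-i_1|, ..., 2|j-i_M|}`, where the
indices are `i 1, ..., i M`. -/
def DmultiComp (n M : ℕ) (hM : 1 ≤ M) (i : ℕ → ℕ) (j : ℕ) : ℕ :=
  min (2 * j) (min (2 * (n - j))
    ((Finset.Icc 1 M).inf' (Finset.nonempty_Icc.mpr hM)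
      (fun l => 2 * ((j : ℤ) - (i l : ℤ)).natAbs)))

/-- `D(i_1,...,i_M)^n = Σ_{j=1}^{n-1} min{2j, 2(n-j), 2|j-i_1|, ..., 2|j-i_M|}`. -/
def Dmulti (n M : ℕ) (hM : 1 ≤ M) (i : ℕ → ℕ) : ℕ :=
  ∑ j ∈ Finset.Icc 1 (n - 1), DmultiComp n M hM i j

lemma gauss (h : ℕ) : ∑ j ∈ Finset.Icc 1 h, 2 * j = h * (h + 1) := by
  induction h with
  | zero => simp
  | succ k ih =>
    rw [Finset.sum_Icc_succ_top (by omega), ih]; ring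

lemma Tsum (m : ℕ) : ∑ j ∈ Finset.Ico 1 m, min (2 * j) (2 * (m - j)) = m ^ 2 / 2 := by
  rcases Nat.eq_zero_or_pos m with rfl | hm
  · simp
  have hsplit := Finset.sum_Ico_consecutive (fun j => min (2 * j) (2 * (m - j)))
    (show 1 ≤ m / 2 + 1 by omega) (show m / 2 + 1 ≤ m by omega)
  rw [← hsplit]
  have h1 : ∑ j ∈ Finset.Ico 1 (m / 2 + 1), min (2 * j) (2 * (m - j))
      = ∑ j ∈ Finset.Icc 1 (m / 2), 2 * j := by
    rw [Finset.Ico_add_one_right_eq_Icc]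
    apply Finset.sum_congr rfl
    intro j hj
    simp only [Finset.mem_Icc] at hj
    omega
  have h2 : ∑ j ∈ Finset.Ico (m / 2 + 1) m, min (2 * j) (2 * (m - j))
      = ∑ k ∈ Finset.Icc 1 (m - m / 2 - 1), 2 * k := by
    apply Finset.sum_nbij' (fun j => m - j) (fun k => m - k) <;>
      simp only [Finset.mem_Ico, Finset.mem_Icc] <;> intros <;> omega
  rw [h1, h2, gauss, gauss]
  rcases Nat.even_or_odd m with ⟨k, rfl⟩ | ⟨k, rfl⟩
  · obtain ⟨k', rfl⟩ : ∃ k', k = k' + 1 := ⟨k - 1, by omega⟩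
    rw [show (k' + 1 + (k' + 1)) / 2 = k' + 1 by omega]
    rw [show k' + 1 + (k' + 1) - (k' + 1) - 1 = k' by omega]
    have key : (k' + 1 + (k' + 1)) ^ 2 = 2 * ((k' + 1) * (k' + 1 + 1) + k' * (k' + 1)) := by ring
    omega
  · rw [show (2 * k + 1) / 2 = k by omega]
    rw [show 2 * k + 1 - k - 1 = k by omega]
    have key : (2 * k + 1) ^ 2 = 2 * (k * (k + 1) + k * (k + 1)) + 1 := by ring
    omega

lemma shiftTsum (a n : ℕ) (han : a ≤ n) :
    ∑ j ∈ Finset.Ico a n, min (2 * (j - a)) (2 * (n - j)) = (n - a) ^ 2 / 2 := by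
  have h : ∑ j ∈ Finset.Ico a n, min (2 * (j - a)) (2 * (n - j))
      = ∑ k ∈ Finset.Ico 0 (n - a), min (2 * k) (2 * ((n - a) - k)) := by
    apply Finset.sum_nbij' (fun j => j - a) (fun k => k + a) <;>
      simp only [Finset.mem_Ico] <;> intros <;> omega
  rw [h]
  rcases Nat.eq_zero_or_pos (n - a) with h0 | h0
  · rw [h0]; simp
  rw [Finset.sum_eq_sum_Ico_succ_bot h0]
  simp only [Nat.sub_zero, Nat.mul_zero, Nat.zero_min, Nat.zero_add]
  rw [Tsum]

lemma combine (a b : ℕ) (ha : 1 ≤ a) (hb : 1 ≤ b) :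
    a ^ 2 / 2 + b ^ 2 / 2 ≤ (a + b - 1) ^ 2 / 2 := by
  obtain ⟨A, rfl⟩ : ∃ A, a = A + 1 := ⟨a - 1, by omega⟩
  obtain ⟨B, rfl⟩ : ∃ B, b = B + 1 := ⟨b - 1, by omega⟩
  rw [show A + 1 + (B + 1) - 1 = A + B + 1 by omega]
  have key : (A + B + 1) ^ 2 + 1 = (A + 1) ^ 2 + (B + 1) ^ 2 + 2 * (A * B) := by ring
  rcases Nat.eq_zero_or_pos A with rfl | hA
  · simp
  rcases Nat.eq_zero_or_pos B with rfl | hB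
  · rw [show A + 0 + 1 = A + 1 by ring]; simp
  have hAB : 1 ≤ A * B := Nat.one_le_iff_ne_zero.mpr (by positivity)
  omega

lemma mono_aux (M : ℕ) (i : ℕ → ℕ) (himono : ∀ l, 1 ≤ l → l < M → i l < i (l + 1)) :
    ∀ l₂ l₁, 1 ≤ l₁ → l₁ ≤ l₂ → l₂ ≤ M → i l₁ + (l₂ - l₁) ≤ i l₂ := by
  intro l₂
  induction l₂ with
  | zero => intro l₁ h1 h2 _; omega
  | succ k ih =>
    intro l₁ h1 h2 h3
    rcases Nat.lt_or_ge l₁ (k + 1) with h | h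
    · have hik := himono k (by omega) (by omega)
      have := ih l₁ h1 (by omega) (by omega)
      omega
    · have : l₁ = k + 1 := by omega
      subst this; simp

lemma ineq : ∀ M n (i : ℕ → ℕ) (hM : 1 ≤ M), 2 ≤ n → M ≤ n - 1 → 1 ≤ i 1 → i M ≤ n - 1 →
    (∀ l, 1 ≤ l → l < M → i l < i (l + 1)) → Dmulti n M hM i ≤ (n - M) ^ 2 / 2 := by
  intro M
  induction M with
  | zero => intro n i hM; omega
  | succ m ih =>
    intro n i hM hn hMn hi1 hiM himono
    have hmono := mono_aux (m + 1) i himono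
    have ha1 : 1 ≤ i (m + 1) := by have := hmono (m + 1) 1 le_rfl (by omega) le_rfl; omega
    have ham : m + 1 ≤ i (m + 1) := by have := hmono (m + 1) 1 le_rfl (by omega) le_rfl; omega
    set a := i (m + 1) with ha
    have han : a ≤ n - 1 := hiM
    have hIcc : Finset.Icc 1 (n - 1) = Finset.Ico 1 n := by
      rw [← Finset.Ico_add_one_right_eq_Icc]; congr 1; omega
    have hsplit : Dmulti n (m + 1) hM i
        = (∑ j ∈ Finset.Ico 1 a, DmultiComp n (m + 1) hM i j)
          + ∑ j ∈ Finset.Ico a n, DmultiComp n (m + 1) hM i j := by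
      rw [Dmulti, hIcc]
      exact (Finset.sum_Ico_consecutive _ (by omega) (by omega)).symm
    have hinfle : ∀ (j : ℕ), DmultiComp n (m + 1) hM i j
        ≤ 2 * ((j : ℤ) - (a : ℤ)).natAbs := by
      intro j
      refine le_trans (le_trans (min_le_right _ _) (min_le_right _ _)) ?_
      exact Finset.inf'_le _ (by simp)
    have piece2 : ∑ j ∈ Finset.Ico a n, DmultiComp n (m + 1) hM i j ≤ (n - a) ^ 2 / 2 := by
      rw [← shiftTsum a n (by omega)]
      apply Finset.sum_le_sum
      intro j hj
      simp only [Finset.mem_Ico] at hj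
      have h1 := hinfle j
      have h2 : 2 * ((j : ℤ) - (a : ℤ)).natAbs = 2 * (j - a) := by omega
      rw [h2] at h1
      have h3 : DmultiComp n (m + 1) hM i j ≤ 2 * (n - j) :=
        le_trans (min_le_right _ _) (min_le_left _ _)
      exact le_min h1 h3
    rw [hsplit]
    rcases Nat.eq_zero_or_pos m with rfl | hm
    · -- M = 1
      have piece1 : ∑ j ∈ Finset.Ico 1 a, DmultiComp n 1 hM i j ≤ a ^ 2 / 2 := by
        rw [← Tsum a]
        apply Finset.sum_le_sum
        intro j hj
        simp only [Finset.mem_Ico] at hj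
        have h1 := hinfle j
        have h2 : 2 * ((j : ℤ) - (a : ℤ)).natAbs = 2 * (a - j) := by omega
        rw [h2] at h1
        exact le_min (min_le_left _ _) h1
      calc _ ≤ a ^ 2 / 2 + (n - a) ^ 2 / 2 := Nat.add_le_add piece1 piece2
        _ ≤ (a + (n - a) - 1) ^ 2 / 2 := combine _ _ ha1 (by omega)
        _ = (n - 1) ^ 2 / 2 := by congr 2; omega
    · -- M = m + 1, m ≥ 1
      have hm1 : 1 ≤ m := hm
      have hcomp : ∀ j, j < a → DmultiComp n (m + 1) hM i j ≤ DmultiComp a m hm1 i j := by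
        intro j hja
        refine le_min (min_le_left _ _) (le_min ?_ ?_)
        · have h1 := hinfle j
          have h2 : 2 * ((j : ℤ) - (a : ℤ)).natAbs = 2 * (a - j) := by omega
          rw [h2] at h1; exact h1
        · apply Finset.le_inf'
          intro b hb
          refine le_trans (le_trans (min_le_right _ _) (min_le_right _ _)) ?_
          exact Finset.inf'_le _ (by simp at hb ⊢; omega)
      have hlast : i m < a := by rw [ha]; exact himono m hm1 (by omega)
      have him : m ≤ i m := by have := hmono m 1 le_rfl hm1 (by omega); omega
      have piece1 : ∑ j ∈ Finset.Ico 1 a, DmultiComp n (m + 1) hM i j ≤ Dmulti a m hm1 i := by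
        rw [Dmulti, show Finset.Icc 1 (a - 1) = Finset.Ico 1 a from by
          rw [← Finset.Ico_add_one_right_eq_Icc]; congr 1; omega]
        exact Finset.sum_le_sum fun j hj => hcomp j (by simp at hj; omega)
      have hih := ih a i hm1 (by omega) (by omega) hi1 (by omega)
        (fun l hl hlm => himono l hl (by omega))
      calc _ ≤ (a - m) ^ 2 / 2 + (n - a) ^ 2 / 2 :=
            Nat.add_le_add (le_trans piece1 hih) piece2
        _ ≤ ((a - m) + (n - a) - 1) ^ 2 / 2 := combine _ _ (by omega) (by omega)
        _ = (n - (m + 1)) ^ 2 / 2 := by congr 2; omega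

lemma eqpart (n M : ℕ) (hM : 1 ≤ M) (hn : 2 ≤ n) (hMn : M ≤ n - 1) :
    Dmulti n M hM (fun l => l) = (n - M) ^ 2 / 2 := by
  have hterm : ∀ j ∈ Finset.Icc 1 (n - 1),
      DmultiComp n M hM (fun l => l) j = min (2 * (j - M)) (2 * (n - j)) := by
    intro j hj
    simp only [Finset.mem_Icc] at hj
    unfold DmultiComp
    rcases le_or_gt j M with h | h
    · have h0 : (Finset.Icc 1 M).inf' (Finset.nonempty_Icc.mpr hM)
          (fun l => 2 * ((j : ℤ) - ((fun l => l) l : ℕ) : ℤ).natAbs) = 0 := by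
        have := Finset.inf'_le (s := Finset.Icc 1 M) (f := fun l => 2 * (((j : ℤ) - ((l : ℕ) : ℤ)).natAbs)) (b := j) (by simp; omega)
        simp only at this ⊢
        omega
      rw [h0]
      omega
    · have h0 : (Finset.Icc 1 M).inf' (Finset.nonempty_Icc.mpr hM)
          (fun l => 2 * ((j : ℤ) - ((fun l => l) l : ℕ) : ℤ).natAbs) = 2 * (j - M) := by
        apply le_antisymm
        · have := Finset.inf'_le (s := Finset.Icc 1 M) (f := fun l => 2 * (((j : ℤ) - ((l : ℕ) : ℤ)).natAbs)) (b := M) (by simp; omega)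
          simp only at this ⊢
          omega
        · apply Finset.le_inf'
          intro b hb
          simp only [Finset.mem_Icc] at hb
          simp only
          omega
      rw [h0]
      omega
  rw [Dmulti, Finset.sum_congr rfl hterm]
  rw [show Finset.Icc 1 (n - 1) = Finset.Ico 1 n from by rw [← Finset.Ico_add_one_right_eq_Icc]; congr 1; omega]
  rw [← shiftTsum M n (by omega)]
  apply (Finset.sum_subset (by intro x; simp; omega) ?_).symm
  intro j hj hj'
  simp only [Finset.mem_Ico] at hj hj'
  omega

theorem stmt12 (n M : ℕ) (hn : 2 ≤ n) (hM : 1 ≤ M) (hMn : M ≤ n - 1)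
    (i : ℕ → ℕ) (hi1 : 1 ≤ i 1) (hiM : i M ≤ n - 1)
    (himono : ∀ l, 1 ≤ l → l < M → i l < i (l + 1)) :
    Dmulti n M hM i ≤ Dm (n - M) ∧ Dmulti n M hM (fun l => l) = Dm (n - M) := by
  constructor
  · exact ineq M n i hM hn hMn hi1 hiM himono
  · exact eqpart n M hM hn hMn
end
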